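/- Let x be a finite nonempty binary tree, i.e., a finite prefix-closed subset of {0,1}*, and let ∂x denote its set of external nodes (words u ∉ x whose parent is in x). Then ∑_{u ∈ ∂x} |u| · 2^{-|u|} = ∑_{u ∈ x} 2^{-|u|}, where |u| is the length of the word u. -/
import Mathlib


open Finset

/-- The external nodes of a finite binary tree `x ⊆ {0,1}*`: words `u ∉ x` whose
parent is in `x` (equivalently, children of nodes of `x` that are not in `x`). -/
def extNodes (x : Finset (List Bool)) : Finset (List Bool) :=
  (x.biUnion fun u => {u ++ [false], u ++ [true]}).filter (fun u => u ∉ x)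

lemma mem_extNodes {x : Finset (List Bool)} {v : List Bool} :
    v ∈ extNodes x ↔ (∃ p ∈ x, ∃ b, v = p ++ [b]) ∧ v ∉ x := by
  simp only [extNodes, Finset.mem_filter, Finset.mem_biUnion, Finset.mem_insert,
    Finset.mem_singleton]
  constructor
  · rintro ⟨⟨p, hp, h⟩, hv⟩
    exact ⟨⟨p, hp, h.elim (fun h => ⟨false, h⟩) (fun h => ⟨true, h⟩)⟩, hv⟩
  · rintro ⟨⟨p, hp, b, rfl⟩, hv⟩
    refine ⟨⟨p, hp, ?_⟩, hv⟩
    cases b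
    · left; rfl
    · right; rfl

lemma key : ∀ n (x : Finset (List Bool)), x.card ≤ n → ([] : List Bool) ∈ x →
    (∀ u ∈ x, ∀ v : List Bool, v <+: u → v ∈ x) →
    ∑ u ∈ extNodes x, (u.length : ℝ) * (2 : ℝ)⁻¹ ^ u.length =
      ∑ u ∈ x, (2 : ℝ)⁻¹ ^ u.length := by
  intro n
  induction n with
  | zero =>
    intro x hc hroot _
    exact absurd (Finset.card_eq_zero.mp (Nat.le_zero.mp hc) ▸ hroot) (Finset.notMem_empty _)
  | succ n ih =>
    intro x hc hroot hprefix
    obtain ⟨u, hu, hmax⟩ := x.exists_max_image (fun v => v.length) ⟨[], hroot⟩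
    by_cases h0 : u = []
    · -- x = {[]}
      have hx : x = {[]} := by
        ext v
        simp only [Finset.mem_singleton]
        constructor
        · intro hv
          have := hmax v hv
          rw [h0] at this
          simpa using List.length_eq_zero_iff.mp (Nat.le_zero.mp this)
        · rintro rfl; exact hroot
      subst hx
      have he : extNodes {([] : List Bool)} = {[false], [true]} := by decide
      rw [he]
      norm_num
    · -- remove u
      set c0 : List Bool := u ++ [false] with hc0def
      set c1 : List Bool := u ++ [true] with hc1def
      have hnotchild : ∀ b : Bool, u ++ [b] ∉ x := by
        intro b hb
        have := hmax _ hb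
        simp at this
      have hc0x : c0 ∉ x := hnotchild false
      have hc1x : c1 ∉ x := hnotchild true
      have hc0e : c0 ∈ extNodes x := mem_extNodes.mpr ⟨⟨u, hu, false, rfl⟩, hc0x⟩
      have hc1e : c1 ∈ extNodes x := mem_extNodes.mpr ⟨⟨u, hu, true, rfl⟩, hc1x⟩
      have hne : c0 ≠ c1 := by simp [hc0def, hc1def]
      have hue : u ∉ extNodes x := fun h => (mem_extNodes.mp h).2 hu
      -- the smaller tree
      set x' := x.erase u with hx'def
      have hcard' : x'.card ≤ n := by
        rw [hx'def, Finset.card_erase_of_mem hu]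
        omega
      have hroot' : ([] : List Bool) ∈ x' :=
        Finset.mem_erase.mpr ⟨fun h => h0 h.symm, hroot⟩
      have hprefix' : ∀ v ∈ x', ∀ w : List Bool, w <+: v → w ∈ x' := by
        intro v hv w hw
        rw [Finset.mem_erase] at hv ⊢
        refine ⟨?_, hprefix v hv.2 w hw⟩
        rintro rfl
        exact hv.1 (hw.eq_of_length (le_antisymm hw.length_le (hmax v hv.2))).symm
      -- parent of u
      have hupar : u = u.dropLast ++ [u.getLast h0] := (List.dropLast_append_getLast h0).symm
      have hdx : u.dropLast ∈ x := hprefix u hu _ (List.dropLast_prefix u)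
      have hdne : u.dropLast ≠ u := by
        intro h
        have : u.dropLast.length = u.length := by rw [h]
        rw [List.length_dropLast] at this
        have : u.length ≠ 0 := fun hl => h0 (List.length_eq_zero_iff.mp hl)
        omega
      have hdx' : u.dropLast ∈ x' := Finset.mem_erase.mpr ⟨hdne, hdx⟩
      have hux' : u ∉ x' := Finset.notMem_erase u x
      -- set equality
      have hset : extNodes x' = insert u (((extNodes x).erase c0).erase c1) := by
        ext v
        rw [Finset.mem_insert, Finset.mem_erase, Finset.mem_erase, mem_extNodes, mem_extNodes]
        constructor
        · rintro ⟨⟨q, hq, b, rfl⟩, hv⟩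
          rw [Finset.mem_erase] at hq
          by_cases hvu : q ++ [b] = u
          · exact Or.inl hvu
          · refine Or.inr ⟨?_, ?_, ⟨q, hq.2, b, rfl⟩, ?_⟩
            · intro h
              exact hq.1 ((List.append_inj' (h : q ++ [b] = u ++ [true]) rfl).1)
            · intro h
              exact hq.1 ((List.append_inj' (h : q ++ [b] = u ++ [false]) rfl).1)
            · intro h
              exact hv (Finset.mem_erase.mpr ⟨hvu, h⟩)
        · rintro (rfl | ⟨h1, h2, ⟨q, hq, b, rfl⟩, hv⟩)
          · exact ⟨⟨v.dropLast, hdx', v.getLast h0, hupar⟩, hux'⟩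
          · have hqu : q ≠ u := by
              rintro rfl
              cases b
              · exact h2 rfl
              · exact h1 rfl
            exact ⟨⟨q, Finset.mem_erase.mpr ⟨hqu, hq⟩, b, rfl⟩,
              fun h => hv (Finset.mem_of_mem_erase h)⟩
      -- sums
      set f : List Bool → ℝ := fun u => (u.length : ℝ) * (2 : ℝ)⁻¹ ^ u.length with hf
      set g : List Bool → ℝ := fun u => (2 : ℝ)⁻¹ ^ u.length with hg
      have hIH : ∑ v ∈ extNodes x', f v = ∑ v ∈ x', g v := ih x' hcard' hroot' hprefix'
      have hc1e' : c1 ∈ (extNodes x).erase c0 := Finset.mem_erase.mpr ⟨hne.symm, hc1e⟩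
      have hsum1 : ∑ v ∈ extNodes x, f v
          = f c0 + (f c1 + ∑ v ∈ ((extNodes x).erase c0).erase c1, f v) := by
        rw [Finset.add_sum_erase _ _ hc1e', Finset.add_sum_erase _ _ hc0e]
      have huee : u ∉ ((extNodes x).erase c0).erase c1 :=
        fun h => hue (Finset.mem_of_mem_erase (Finset.mem_of_mem_erase h))
      have hsum2 : ∑ v ∈ extNodes x', f v
          = f u + ∑ v ∈ ((extNodes x).erase c0).erase c1, f v := by
        rw [hset, Finset.sum_insert huee]
      have hsum3 : ∑ v ∈ x', g v = ∑ v ∈ x, g v - g u :=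
        Finset.sum_erase_eq_sub hu
      have harith : f c0 + f c1 = f u + g u := by
        have hl0 : c0.length = u.length + 1 := by simp [hc0def]
        have hl1 : c1.length = u.length + 1 := by simp [hc1def]
        rw [hf, hg]
        simp only [hl0, hl1]
        push_cast
        rw [pow_succ]
        ring
      have := hIH
      rw [hsum2, hsum3] at this
      linarith [hsum1, this, harith]

/-- For a finite nonempty binary tree `x` (prefix-closed subset of `{0,1}*` containing the
empty word), `∑_{u ∈ ∂x} |u|·2^{-|u|} = ∑_{u ∈ x} 2^{-|u|}`. -/
theorem stmt7 (x : Finset (List Bool)) (hroot : ([] : List Bool) ∈ x)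
    (hprefix : ∀ u ∈ x, ∀ v : List Bool, v <+: u → v ∈ x) :
    ∑ u ∈ extNodes x, (u.length : ℝ) * (2 : ℝ)⁻¹ ^ u.length =
      ∑ u ∈ x, (2 : ℝ)⁻¹ ^ u.length := by
  exact key x.card x le_rfl hroot hprefix
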